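/- arXiv:1910.11837 — 2 statements merged into one kernel-verified Lean document; each statement's English description precedes it below -/
import Mathlib

section
/- Let Q be a chi-squared random variable with K ≥ 3 degrees of freedom. Then for any w > √e, the probability that Q fails to lie in the interval [K/w², Kw²] is at most (√e/w)^K. -/
/-!
Chernoff bounds: for `t < 1/2` the mgf of `Q` is `(1 - 2t)^(-K/2)`, and the optimal
`t = (1 - s⁻²)/2` bounds both `P(Q ≥ K s²)` (for `s ≥ 1`) and `P(Q ≤ K s²)` (for `s ≤ 1`) by
`(s e^((1-s²)/2))^K`. Taking `s = w` and `s = w⁻¹` and factoring out `(√e/w)^K`, it remains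
to show `(x e^(-x/2))^K + e^(-K/(2x)) ≤ 1` for `x = w² ≥ e`. As `e^(-u) ≤ 1/(1+u)`, this
follows from `(x e^(-x/2))^K (K + 2x) ≤ K`, which reduces to `K = 3` and then to
`e^(3x/8) ≥ e · 3x/8`.
-/

open MeasureTheory ProbabilityTheory Real

noncomputable def chiSqTailRate (s : ℝ) : ℝ := s * exp ((1 - s ^ 2) / 2)

lemma exp_mul_inv_sqrt_pow_eq_chiSqTailRate_pow {s : ℝ} (hs : 0 < s) (n : ℕ) :
    exp (-((1 - (s ^ 2)⁻¹) / 2) * (n * s ^ 2)) *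
      (√(1 - 2 * ((1 - (s ^ 2)⁻¹) / 2)))⁻¹ ^ n = chiSqTailRate s ^ n := by
  have hsqrt : (√(1 - 2 * ((1 - (s ^ 2)⁻¹) / 2)))⁻¹ = s := by
    rw [show 1 - 2 * ((1 - (s ^ 2)⁻¹) / 2) = s⁻¹ ^ 2 by ring, sqrt_sq (by positivity),
      inv_inv]
  have hexp : -((1 - (s ^ 2)⁻¹) / 2) * (n * s ^ 2) = n * ((1 - s ^ 2) / 2) := by
    field_simp
    ring
  rw [hsqrt, hexp, exp_nat_mul, chiSqTailRate, mul_pow, mul_comm]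

lemma mul_exp_neg_half_pow_three_mul_le {x : ℝ} (hx : exp 1 ≤ x) :
    (x * exp (-x / 2)) ^ 3 * (3 + 2 * x) ≤ 3 := by
  have he : 2.718 < exp 1 := lt_trans (by norm_num) exp_one_gt_d9
  have hx₀ : 0 < x := by linarith
  have hlin : exp 1 * (3 * x / 8) ≤ exp (3 * x / 8) := by
    have := add_one_le_exp (3 * x / 8 - 1)
    rw [show 3 * x / 8 = 1 + (3 * x / 8 - 1) by ring, exp_add]
    gcongr
    linarith
  have hpoly : 3 + 2 * x ≤ 243 * exp 1 ^ 4 * x / 4096 := by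
    have he4 : 54.5 ≤ exp 1 ^ 4 :=
      le_trans (by norm_num) (pow_le_pow_left₀ (by norm_num) he.le 4)
    nlinarith
  have hexp : exp (-x / 2) ^ 3 = (exp (3 * x / 8) ^ 4)⁻¹ := by
    rw [← exp_nat_mul, ← exp_nat_mul, ← exp_neg]
    push_cast
    ring_nf
  calc (x * exp (-x / 2)) ^ 3 * (3 + 2 * x) = x ^ 3 * (3 + 2 * x) / exp (3 * x / 8) ^ 4 := by
        rw [mul_pow, hexp]
        ring
    _ ≤ x ^ 3 * (243 * exp 1 ^ 4 * x / 4096) / (exp 1 * (3 * x / 8)) ^ 4 := by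
        gcongr
    _ = 3 := by
        field_simp
        ring

lemma mul_exp_neg_half_pow_add_exp_le_one {x : ℝ} (hx : exp 1 ≤ x) {n : ℕ} (hn : 3 ≤ n) :
    (x * exp (-x / 2)) ^ n + exp (-n / (2 * x)) ≤ 1 := by
  have hx₀ : 0 < x := (exp_pos 1).trans_le hx
  have hn' : (3 : ℝ) ≤ n := by exact_mod_cast hn
  set a := x * exp (-x / 2)
  have ha₀ : 0 ≤ a := by positivity
  have ha₃ : a ^ 3 * (3 + 2 * x) ≤ 3 := mul_exp_neg_half_pow_three_mul_le hx
  have ha₁ : a ≤ 1 := by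
    refine (pow_le_one_iff_of_nonneg ha₀ three_ne_zero).mp ?_
    nlinarith [pow_nonneg ha₀ 3]
  have hpow : a ^ n * (n + 2 * x) ≤ n :=
    calc a ^ n * (n + 2 * x) ≤ a ^ 3 * (n / 3 * (3 + 2 * x)) := by
          refine mul_le_mul (pow_le_pow_of_le_one ha₀ ha₁ hn) ?_ (by positivity) (by positivity)
          nlinarith
      _ = n / 3 * (a ^ 3 * (3 + 2 * x)) := by ring
      _ ≤ n := by nlinarith
  have hexp : exp (-n / (2 * x)) * (n + 2 * x) ≤ 2 * x := by
    have h : exp (-n / (2 * x)) * (n / (2 * x) + 1) ≤ 1 :=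
      calc _ ≤ exp (-n / (2 * x)) * exp (n / (2 * x)) := by gcongr; exact add_one_le_exp _
        _ = 1 := by rw [← exp_add, neg_div, neg_add_cancel, exp_zero]
    calc _ = 2 * x * (exp (-n / (2 * x)) * (n / (2 * x) + 1)) := by field_simp
      _ ≤ 2 * x := mul_le_of_le_one_right (by positivity) h
  nlinarith

lemma chiSqTailRate_pow_add_inv_pow_le {w : ℝ} (hw : √(exp 1) ≤ w) {n : ℕ} (hn : 3 ≤ n) :
    chiSqTailRate w ^ n + chiSqTailRate w⁻¹ ^ n ≤ (√(exp 1) / w) ^ n := by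
  have hw₀ : 0 < w := (sqrt_pos.2 (exp_pos 1)).trans_le hw
  have hx : exp 1 ≤ w ^ 2 := sq_sqrt (exp_pos 1).le ▸ pow_le_pow_left₀ (sqrt_nonneg _) hw 2
  have h₁ : chiSqTailRate w ^ n = (√(exp 1) / w) ^ n * (w ^ 2 * exp (-w ^ 2 / 2)) ^ n := by
    rw [← mul_pow, chiSqTailRate, ← exp_half,
      show (1 - w ^ 2) / 2 = 1 / 2 + -w ^ 2 / 2 by ring, exp_add]
    field_simp
  have h₂ : chiSqTailRate w⁻¹ ^ n = (√(exp 1) / w) ^ n * exp (-n / (2 * w ^ 2)) := by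
    rw [chiSqTailRate, ← exp_half,
      show (1 - w⁻¹ ^ 2) / 2 = 1 / 2 + -(1 / (2 * w ^ 2)) by field_simp; ring, exp_add,
      show -(n : ℝ) / (2 * w ^ 2) = n * -(1 / (2 * w ^ 2)) by ring, exp_nat_mul, ← mul_pow]
    ring
  rw [h₁, h₂, ← mul_add]
  exact mul_le_of_le_one_right (by positivity) (mul_exp_neg_half_pow_add_exp_le_one hx hn)

namespace ProbabilityTheory

lemma gaussianPDFReal_mul_exp_mul_sq (t x : ℝ) :
    gaussianPDFReal 0 1 x * exp (t * x ^ 2) = (√(2 * π))⁻¹ * exp (-(1 / 2 - t) * x ^ 2) := by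
  rw [gaussianPDFReal, mul_assoc, ← exp_add]
  push_cast
  ring_nf

lemma integrable_exp_mul_sq_gaussianReal {t : ℝ} (ht : t < 1 / 2) :
    Integrable (fun x ↦ exp (t * x ^ 2)) (gaussianReal 0 1) := by
  rw [gaussianReal_of_var_ne_zero _ one_ne_zero, integrable_withDensity_iff_integrable_smul'
    (measurable_gaussianPDF 0 1) (ae_of_all _ fun _ ↦ gaussianPDF_lt_top)]
  simp only [toReal_gaussianPDF, smul_eq_mul, gaussianPDFReal_mul_exp_mul_sq]
  exact (integrable_exp_neg_mul_sq (by linarith)).const_mul _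

-- For `t ≥ 1/2` both sides are junk `0`: the integrand is not integrable and `√(1 - 2t) = 0`.
lemma mgf_sq_gaussianReal (t : ℝ) :
    mgf (fun x ↦ x ^ 2) (gaussianReal 0 1) t = (√(1 - 2 * t))⁻¹ := by
  rw [mgf, integral_gaussianReal_eq_integral_smul one_ne_zero]
  simp only [smul_eq_mul, gaussianPDFReal_mul_exp_mul_sq]
  rw [integral_const_mul, integral_gaussian, ← sqrt_inv, ← sqrt_inv,
    ← sqrt_mul (inv_nonneg.mpr (by positivity))]
  congr 1
  field_simp

section SumOfSquares

variable {Ω : Type*} [MeasurableSpace Ω] {P : Measure Ω} {t : ℝ}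

lemma integrable_exp_mul_sq_of_map_eq_gaussianReal {X : Ω → ℝ} (hX : AEMeasurable X P)
    (hlaw : P.map X = gaussianReal 0 1) (ht : t < 1 / 2) :
    Integrable (fun ω ↦ exp (t * X ω ^ 2)) P := by
  have h := integrable_exp_mul_sq_gaussianReal ht
  rw [← hlaw, integrable_map_measure (by fun_prop) hX] at h
  exact h

lemma mgf_sq_of_map_eq_gaussianReal {X : Ω → ℝ} (hX : AEMeasurable X P)
    (hlaw : P.map X = gaussianReal 0 1) :
    mgf (fun ω ↦ X ω ^ 2) P t = (√(1 - 2 * t))⁻¹ := by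
  rw [← mgf_sq_gaussianReal, ← hlaw, mgf_map hX (by fun_prop)]
  rfl

variable {ι : Type*} [Fintype ι] {X : ι → Ω → ℝ}

lemma iIndepFun.integrable_exp_mul_sum_sq (hindep : iIndepFun X P) (hmeas : ∀ i, Measurable (X i))
    (hlaw : ∀ i, P.map (X i) = gaussianReal 0 1) (ht : t < 1 / 2) :
    Integrable (fun ω ↦ exp (t * ∑ i, X i ω ^ 2)) P := by
  have := hindep.isProbabilityMeasure
  have hsq := hindep.comp (fun _ x ↦ x ^ 2) fun _ ↦ measurable_id.pow_const 2
  have h := hsq.integrable_exp_mul_sum (fun i ↦ (hmeas i).pow_const 2) (s := Finset.univ)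
    fun i _ ↦ integrable_exp_mul_sq_of_map_eq_gaussianReal (hmeas i).aemeasurable (hlaw i) ht
  simpa only [Finset.sum_apply, Function.comp_apply] using h

lemma iIndepFun.mgf_sum_sq (hindep : iIndepFun X P) (hmeas : ∀ i, Measurable (X i))
    (hlaw : ∀ i, P.map (X i) = gaussianReal 0 1) :
    mgf (fun ω ↦ ∑ i, X i ω ^ 2) P t = (√(1 - 2 * t))⁻¹ ^ Fintype.card ι := by
  have hsq := hindep.comp (fun _ x ↦ x ^ 2) fun _ ↦ measurable_id.pow_const 2
  have h := hsq.mgf_sum (fun i ↦ (hmeas i).pow_const 2) (t := t) Finset.univ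
  simp only [Finset.sum_fn, Function.comp_def] at h
  rw [h, Finset.prod_congr rfl fun i _ ↦
    mgf_sq_of_map_eq_gaussianReal (hmeas i).aemeasurable (hlaw i), Finset.prod_const,
    Finset.card_univ]

lemma iIndepFun.measureReal_sum_sq_ge_le (hindep : iIndepFun X P) (hmeas : ∀ i, Measurable (X i))
    (hlaw : ∀ i, P.map (X i) = gaussianReal 0 1) {s : ℝ} (hs : 1 ≤ s) :
    P.real {ω | Fintype.card ι * s ^ 2 ≤ ∑ i, X i ω ^ 2} ≤
      chiSqTailRate s ^ Fintype.card ι := by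
  have := hindep.isProbabilityMeasure
  have ht₀ : 0 ≤ (1 - (s ^ 2)⁻¹) / 2 := by
    have : (s ^ 2)⁻¹ ≤ 1 := inv_le_one_of_one_le₀ (one_le_pow₀ hs)
    linarith
  have ht : (1 - (s ^ 2)⁻¹) / 2 < 1 / 2 := by
    have : 0 < (s ^ 2)⁻¹ := by positivity
    linarith
  calc _ ≤ _ := measure_ge_le_exp_mul_mgf _ ht₀ (hindep.integrable_exp_mul_sum_sq hmeas hlaw ht)
    _ = _ := by
      rw [hindep.mgf_sum_sq hmeas hlaw, exp_mul_inv_sqrt_pow_eq_chiSqTailRate_pow (by positivity)]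

lemma iIndepFun.measureReal_sum_sq_le_le (hindep : iIndepFun X P) (hmeas : ∀ i, Measurable (X i))
    (hlaw : ∀ i, P.map (X i) = gaussianReal 0 1) {s : ℝ} (hs₀ : 0 < s) (hs : s ≤ 1) :
    P.real {ω | ∑ i, X i ω ^ 2 ≤ Fintype.card ι * s ^ 2} ≤
      chiSqTailRate s ^ Fintype.card ι := by
  have := hindep.isProbabilityMeasure
  have ht₀ : (1 - (s ^ 2)⁻¹) / 2 ≤ 0 := by
    have : 1 ≤ (s ^ 2)⁻¹ := one_le_inv₀ (by positivity) |>.mpr (pow_le_one₀ hs₀.le hs)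
    linarith
  have ht : (1 - (s ^ 2)⁻¹) / 2 < 1 / 2 := by
    have : 0 < (s ^ 2)⁻¹ := by positivity
    linarith
  calc _ ≤ _ := measure_le_le_exp_mul_mgf _ ht₀ (hindep.integrable_exp_mul_sum_sq hmeas hlaw ht)
    _ = _ := by
      rw [hindep.mgf_sum_sq hmeas hlaw, exp_mul_inv_sqrt_pow_eq_chiSqTailRate_pow hs₀]

end SumOfSquares

end ProbabilityTheory

/-- Chi-squared tail bound: for Q ~ χ²(K) (sum of squares of K iid standard normals),
K ≥ 3, and any w > √e, the probability that Q ∉ [K/w², Kw²] is at most (√e/w)^K. -/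
theorem stmt0 {Ω : Type*} [MeasurableSpace Ω] (Pr : Measure Ω) [IsProbabilityMeasure Pr]
    (K : ℕ) (hK : 3 ≤ K)
    (X : Fin K → Ω → ℝ)
    (hmeas : ∀ i, Measurable (X i))
    (hindep : iIndepFun X Pr)
    (hgauss : ∀ i, Measure.map (X i) Pr = gaussianReal 0 1)
    (Q : Ω → ℝ) (hQ : ∀ ω, Q ω = ∑ i, (X i ω) ^ 2)
    (w : ℝ) (hw : Real.sqrt (Real.exp 1) < w) :
    Pr {ω | ¬ ((K : ℝ) / w ^ 2 ≤ Q ω ∧ Q ω ≤ (K : ℝ) * w ^ 2)}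
      ≤ ENNReal.ofReal ((Real.sqrt (Real.exp 1) / w) ^ K) := by
  obtain rfl : Q = fun ω ↦ ∑ i, X i ω ^ 2 := funext hQ
  have hw₀ : 0 < w := (sqrt_nonneg _).trans_lt hw
  have hw₁ : 1 ≤ w := (one_le_sqrt.mpr (one_le_exp zero_le_one)).trans hw.le
  have hlow := hindep.measureReal_sum_sq_le_le hmeas hgauss (inv_pos.mpr hw₀)
    (inv_le_one_of_one_le₀ hw₁)
  have hup := hindep.measureReal_sum_sq_ge_le hmeas hgauss hw₁
  simp only [Fintype.card_fin, inv_pow, ← div_eq_mul_inv] at hlow hup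
  have hsub : {ω | ¬ (K / w ^ 2 ≤ ∑ i, X i ω ^ 2 ∧ ∑ i, X i ω ^ 2 ≤ K * w ^ 2)} ⊆
      {ω | ∑ i, X i ω ^ 2 ≤ K / w ^ 2} ∪ {ω | K * w ^ 2 ≤ ∑ i, X i ω ^ 2} := by
    intro ω hω
    simp only [Set.mem_ofPred_eq, not_and_or, not_le, Set.mem_union] at hω ⊢
    exact hω.imp le_of_lt le_of_lt
  rw [← ofReal_measureReal]
  refine ENNReal.ofReal_le_ofReal ?_
  calc _ ≤ _ := measureReal_mono hsub
    _ ≤ _ := measureReal_union_le _ _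
    _ ≤ chiSqTailRate w⁻¹ ^ K + chiSqTailRate w ^ K := add_le_add hlow hup
    _ ≤ _ := by linarith [chiSqTailRate_pow_add_inv_pow_le hw.le hK]
end

section
/- Let Φ ∈ ℝ^{K×N} be a random matrix whose i-th row is (1/√K)Zᵢᵀ with Z₁,…,Z_K independent N(0,Σ) Gaussian vectors, K ≥ 3. Then for any fixed v ∈ ℝ^N and any w > √e, with probability at least 1 − (√e/w)^K one has w⁻¹‖v‖_Σ ≤ ‖Φv‖₂ ≤ w‖v‖_Σ. -/
open MeasureTheory ProbabilityTheory Real Matrix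
open scoped NNReal ENNReal

/-!
The variables `Xᵢ = Zᵢ ⬝ᵥ v` are independent centred Gaussians of variance `c = vᵀΣv`, so
`∑ Xᵢ²` has moment generating function `(1 - 2tc)^(-K/2)`. Chernoff's bound at the optimal `t`
gives `P(∑ Xᵢ² ≥ K s² c) ≤ (s e^{(1 - s²)/2})^K` for `s ≥ 1` and the same bound for the lower
tail `P(∑ Xᵢ² ≤ K s² c)` when `s ≤ 1`. With `s = w` and `s = w⁻¹` the two tails factor as
`(√e / w)^K (e^{-K/(2w²)} + (w² e^{-w²/2})^K)`, and the bracket is at most `1` once `w² > e`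
and `K ≥ 3`, by Taylor bounds on `exp`. When `c = 0` all `Xᵢ` vanish almost surely.
-/

lemma lt_exp_half (u : ℝ) : u < exp (u / 2) := by
  rcases lt_or_ge u 0 with hu | hu
  · exact hu.trans (exp_pos _)
  · nlinarith [quadratic_le_exp_of_nonneg (by linarith : 0 ≤ u / 2)]

lemma exp_neg_le_quadratic {x : ℝ} (hx : 0 ≤ x) : exp (-x) ≤ 1 - x + x ^ 2 / 2 := by
  have hq := quadratic_le_exp_of_nonneg hx
  have hpos : 0 < 1 - x + x ^ 2 / 2 := by nlinarith [sq_nonneg (x - 1)]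
  rw [exp_neg, inv_le_iff_one_le_mul₀ (exp_pos x)]
  nlinarith [mul_le_mul_of_nonneg_left hq hpos.le, pow_nonneg hx 4]

lemma pow_five_le_mul_taylor_cube {u : ℝ} (hu : 2.718 ≤ u) :
    8 * u ^ 5 ≤ (12 * u - 9) * (1 + u / 2 + u ^ 2 / 8 + u ^ 3 / 48 + u ^ 4 / 384) ^ 3 := by
  have h : (0 : ℝ) ≤ u - 2.718 := by linarith
  nlinarith [pow_nonneg h 2, pow_nonneg h 3, pow_nonneg h 4, pow_nonneg h 5,
    pow_nonneg h 6, pow_nonneg h 7, pow_nonneg h 8, pow_nonneg h 9,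
    pow_nonneg h 10, pow_nonneg h 11, pow_nonneg h 12, pow_nonneg h 13]

lemma taylor_le_exp_half {u : ℝ} (hu : 0 ≤ u) :
    1 + u / 2 + u ^ 2 / 8 + u ^ 3 / 48 + u ^ 4 / 384 ≤ exp (u / 2) := by
  have := sum_le_exp_of_nonneg (x := u / 2) (by positivity) 5
  simp only [Finset.sum_range_succ, Finset.sum_range_zero, Nat.factorial] at this
  convert this using 1
  push_cast
  ring

-- The right-hand side is `x - x² / 2` for `x = 3 / (2u)`.
lemma mul_exp_neg_half_pow_three_le {u : ℝ} (hu : exp 1 < u) :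
    (u * exp (-u / 2)) ^ 3 ≤ (12 * u - 9) / (8 * u ^ 2) := by
  have hu' : 2.718 ≤ u := by linarith [exp_one_gt_d9]
  have hexp : 8 * u ^ 5 ≤ (12 * u - 9) * exp (u / 2) ^ 3 :=
    (pow_five_le_mul_taylor_cube hu').trans <| by
      gcongr
      · linarith
      · exact taylor_le_exp_half (by linarith)
  have hinv : exp (-u / 2) ^ 3 * exp (u / 2) ^ 3 = 1 := by
    rw [← mul_pow, ← exp_add, neg_div, neg_add_cancel, exp_zero, one_pow]
  rw [mul_pow, le_div_iff₀ (by positivity)]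
  nlinarith [mul_le_mul_of_nonneg_left hexp (pow_nonneg (exp_pos (-u / 2)).le 3)]

lemma exp_neg_div_add_mul_exp_neg_half_pow_le_one {u : ℝ} (hu : exp 1 < u) {K : ℕ}
    (hK : 3 ≤ K) : exp (-K / (2 * u)) + (u * exp (-u / 2)) ^ K ≤ 1 := by
  have hu0 : 0 < u := (exp_pos 1).trans hu
  have ha0 : 0 ≤ u * exp (-u / 2) := by positivity
  have ha1 : u * exp (-u / 2) ≤ 1 := by
    rw [neg_div, exp_neg, ← div_eq_mul_inv, div_le_one (exp_pos _)]
    exact (lt_exp_half u).le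
  have hK' : exp (-K / (2 * u)) ≤ exp (-(3 / (2 * u))) := by
    rw [exp_le_exp, neg_div]
    gcongr
    exact_mod_cast hK
  have hx : 3 / (2 * u) - (3 / (2 * u)) ^ 2 / 2 = (12 * u - 9) / (8 * u ^ 2) := by
    field_simp; ring
  calc exp (-K / (2 * u)) + (u * exp (-u / 2)) ^ K
      ≤ exp (-(3 / (2 * u))) + (u * exp (-u / 2)) ^ 3 :=
        add_le_add hK' (pow_le_pow_of_le_one ha0 ha1 hK)
    _ ≤ (1 - 3 / (2 * u) + (3 / (2 * u)) ^ 2 / 2) + (3 / (2 * u) - (3 / (2 * u)) ^ 2 / 2) := by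
        rw [hx]
        exact add_le_add (exp_neg_le_quadratic (by positivity)) (mul_exp_neg_half_pow_three_le hu)
    _ = 1 := by ring

lemma integral_exp_mul_sq_gaussianReal {c : ℝ≥0} (hc : c ≠ 0) {t : ℝ} (ht : 2 * t * c < 1) :
    ∫ x, exp (t * x ^ 2) ∂gaussianReal 0 c = (√(1 - 2 * t * c))⁻¹ := by
  have hc0 : (0 : ℝ) < c := by positivity
  have hb : 0 < (1 - 2 * t * c) / (2 * c) := by
    apply div_pos <;> linarith
  have hdensity : ∀ x, gaussianPDFReal 0 c x • exp (t * x ^ 2)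
      = (√(2 * π * c))⁻¹ * exp (-((1 - 2 * t * c) / (2 * c)) * x ^ 2) := by
    intro x
    rw [gaussianPDFReal, smul_eq_mul, mul_assoc, ← exp_add, sub_zero]
    congr 2
    field_simp
    ring
  rw [integral_gaussianReal_eq_integral_smul hc, integral_congr_ae (ae_of_all _ hdensity),
    integral_const_mul, integral_gaussian, ← sqrt_inv, ← sqrt_mul (by positivity), ← sqrt_inv]
  congr 1
  field_simp

lemma aemeasurable_of_map_eq_gaussianReal {Ω : Type*} [MeasurableSpace Ω] {Pr : Measure Ω}
    {X : Ω → ℝ} {μ : ℝ} {v : ℝ≥0} (hX : Pr.map X = gaussianReal μ v) : AEMeasurable X Pr :=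
  .of_map_ne_zero (by rw [hX]; exact IsProbabilityMeasure.ne_zero _)

lemma mgf_sq_of_map_eq_gaussianReal {Ω : Type*} [MeasurableSpace Ω] {Pr : Measure Ω}
    {X : Ω → ℝ} {c : ℝ≥0} (hX : Pr.map X = gaussianReal 0 c) (hc : c ≠ 0) {t : ℝ}
    (ht : 2 * t * c < 1) :
    mgf (fun ω ↦ X ω ^ 2) Pr t = (√(1 - 2 * t * c))⁻¹ := by
  rw [← integral_exp_mul_sq_gaussianReal hc ht, ← hX,
    integral_map (aemeasurable_of_map_eq_gaussianReal hX) (by fun_prop)]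
  rfl

lemma exp_neg_chernoff_mul_pow {c : ℝ≥0} (hc : c ≠ 0) {s : ℝ} (hs : 0 < s) (n : ℕ) :
    exp (-((1 - (s ^ 2)⁻¹) / (2 * c)) * (n * s ^ 2 * c)) * s ^ n
      = (s * exp ((1 - s ^ 2) / 2)) ^ n := by
  rw [mul_pow, mul_comm, ← exp_nat_mul]
  congr 2
  field_simp
  ring

section SumOfSquares

variable {Ω ι : Type*} [MeasurableSpace Ω] {Pr : Measure Ω} [Fintype ι] {X : ι → Ω → ℝ}
  {c : ℝ≥0}

lemma mgf_sum_sq_of_iIndepFun_gaussianReal (hindep : iIndepFun X Pr)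
    (hX : ∀ i, Pr.map (X i) = gaussianReal 0 c) (hc : c ≠ 0) {t : ℝ} (ht : 2 * t * c < 1) :
    mgf (fun ω ↦ ∑ i, X i ω ^ 2) Pr t = (√(1 - 2 * t * c))⁻¹ ^ Fintype.card ι := by
  have hsq := (hindep.comp (fun _ x ↦ x ^ 2) fun _ ↦ measurable_id.pow_const 2).mgf_sum₀
    (fun i ↦ (aemeasurable_of_map_eq_gaussianReal (hX i)).pow_const 2) (t := t) Finset.univ
  rw [Finset.sum_fn] at hsq
  simp only [Function.comp_def] at hsq
  rw [hsq, Finset.prod_congr rfl fun i _ ↦ mgf_sq_of_map_eq_gaussianReal (hX i) hc ht,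
    Finset.prod_const, Finset.card_univ]

-- `t = (1 - s⁻²) / (2c)` minimises `e^{-t K s² c} (1 - 2tc)^{-K/2}`.
lemma mgf_sum_sq_chernoff (hindep : iIndepFun X Pr)
    (hX : ∀ i, Pr.map (X i) = gaussianReal 0 c) (hc : c ≠ 0) {s : ℝ} (hs : 0 < s) :
    mgf (fun ω ↦ ∑ i, X i ω ^ 2) Pr ((1 - (s ^ 2)⁻¹) / (2 * c)) = s ^ Fintype.card ι := by
  have h : 1 - 2 * ((1 - (s ^ 2)⁻¹) / (2 * c)) * c = s⁻¹ ^ 2 := by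
    field_simp; ring
  rw [mgf_sum_sq_of_iIndepFun_gaussianReal hindep hX hc (by rw [← sub_pos, h]; positivity),
    h, sqrt_sq (by positivity), inv_inv]

lemma measureReal_le_sum_sq_le (hindep : iIndepFun X Pr)
    (hX : ∀ i, Pr.map (X i) = gaussianReal 0 c) (hc : c ≠ 0) {s : ℝ} (hs : 1 ≤ s) :
    Pr.real {ω | Fintype.card ι * s ^ 2 * c ≤ ∑ i, X i ω ^ 2}
      ≤ (s * exp ((1 - s ^ 2) / 2)) ^ Fintype.card ι := by
  have := hindep.isProbabilityMeasure
  have hs0 : 0 < s := by linarith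
  have hmgf := mgf_sum_sq_chernoff hindep hX hc hs0
  have ht : 0 ≤ (1 - (s ^ 2)⁻¹) / (2 * c) :=
    div_nonneg (sub_nonneg.2 (inv_le_one_of_one_le₀ (one_le_pow₀ hs))) (by positivity)
  calc _ ≤ _ := measure_ge_le_exp_mul_mgf _ ht
        (.of_integral_ne_zero (by rw [← mgf, hmgf]; positivity))
    _ = _ := by rw [hmgf, exp_neg_chernoff_mul_pow hc hs0]

lemma measureReal_sum_sq_le_le (hindep : iIndepFun X Pr)
    (hX : ∀ i, Pr.map (X i) = gaussianReal 0 c) (hc : c ≠ 0) {s : ℝ} (hs0 : 0 < s)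
    (hs : s ≤ 1) :
    Pr.real {ω | ∑ i, X i ω ^ 2 ≤ Fintype.card ι * s ^ 2 * c}
      ≤ (s * exp ((1 - s ^ 2) / 2)) ^ Fintype.card ι := by
  have := hindep.isProbabilityMeasure
  have hmgf := mgf_sum_sq_chernoff hindep hX hc hs0
  have ht : (1 - (s ^ 2)⁻¹) / (2 * c) ≤ 0 := by
    have : 1 ≤ (s ^ 2)⁻¹ := one_le_inv₀ (by positivity) |>.2 (pow_le_one₀ hs0.le hs)
    exact div_nonpos_of_nonpos_of_nonneg (by linarith) (by positivity)
  calc _ ≤ _ := measure_le_le_exp_mul_mgf _ ht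
        (.of_integral_ne_zero (by rw [← mgf, hmgf]; positivity))
    _ = _ := by rw [hmgf, exp_neg_chernoff_mul_pow hc hs0]

end SumOfSquares

lemma chernoff_tails_le {w : ℝ} (hw : √(exp 1) < w) {n : ℕ} (hn : 3 ≤ n) :
    (w⁻¹ * exp ((1 - w⁻¹ ^ 2) / 2)) ^ n + (w * exp ((1 - w ^ 2) / 2)) ^ n
      ≤ (√(exp 1) / w) ^ n := by
  have hw0 : 0 < w := (sqrt_nonneg _).trans_lt hw
  have hu : exp 1 < w ^ 2 := by
    rwa [← sqrt_lt' hw0]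
  have hsqrt : √(exp 1) = exp (1 / 2) := by
    rw [sqrt_eq_iff_mul_self_eq_of_pos (exp_pos _), ← exp_add]; norm_num
  have hlow : w⁻¹ * exp ((1 - w⁻¹ ^ 2) / 2) = √(exp 1) / w * exp (-1 / (2 * w ^ 2)) := by
    rw [show (1 - w⁻¹ ^ 2) / 2 = 1 / 2 + -1 / (2 * w ^ 2) by field_simp; ring, exp_add, hsqrt]
    ring
  have hup : w * exp ((1 - w ^ 2) / 2) = √(exp 1) / w * (w ^ 2 * exp (-w ^ 2 / 2)) := by
    rw [show (1 - w ^ 2) / 2 = 1 / 2 + -w ^ 2 / 2 by ring, exp_add, hsqrt]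
    field_simp
  have hpow : exp (-1 / (2 * w ^ 2)) ^ n = exp (-n / (2 * w ^ 2)) := by
    rw [← exp_nat_mul]; ring_nf
  rw [hlow, hup, mul_pow, mul_pow, hpow, ← mul_add]
  exact mul_le_of_le_one_right (by positivity)
    (exp_neg_div_add_mul_exp_neg_half_pow_le_one hu hn)

lemma ofReal_one_sub_le_of_measure_compl_le {α : Type*} [MeasurableSpace α] {μ : Measure α}
    [IsProbabilityMeasure μ] {s : Set α} {q : ℝ} (hq : 0 ≤ q) (h : μ sᶜ ≤ ENNReal.ofReal q) :
    ENNReal.ofReal (1 - q) ≤ μ s := by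
  have hcover : 1 ≤ μ s + μ sᶜ := by
    rw [← measure_univ (μ := μ), ← Set.union_compl_self s]
    exact measure_union_le s sᶜ
  rw [ENNReal.ofReal_sub 1 hq, ENNReal.ofReal_one, tsub_le_iff_right]
  exact hcover.trans (by gcongr)

lemma mul_sqrt_eq_sqrt_mean {n a : ℝ} (hn : n ≠ 0) (ha : 0 ≤ a) (c : ℝ) :
    a * √c = √(1 / n * (n * a ^ 2 * c)) := by
  rw [show 1 / n * (n * a ^ 2 * c) = a ^ 2 * c by field_simp, sqrt_mul (sq_nonneg a), sqrt_sq ha]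

theorem ofReal_one_sub_le_measure_sqrt_mean_sq_mem {Ω ι : Type*} [MeasurableSpace Ω]
    {Pr : Measure Ω} [Fintype ι] {X : ι → Ω → ℝ} {c : ℝ≥0} (hindep : iIndepFun X Pr)
    (hX : ∀ i, Pr.map (X i) = gaussianReal 0 c) (hn : 3 ≤ Fintype.card ι) {w : ℝ}
    (hw : √(exp 1) < w) :
    ENNReal.ofReal (1 - (√(exp 1) / w) ^ Fintype.card ι) ≤
      Pr {ω | w⁻¹ * √c ≤ √(1 / (Fintype.card ι : ℝ) * ∑ i, X i ω ^ 2)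
        ∧ √(1 / (Fintype.card ι : ℝ) * ∑ i, X i ω ^ 2) ≤ w * √c} := by
  have := hindep.isProbabilityMeasure
  have hw0 : 0 < w := (sqrt_nonneg _).trans_lt hw
  refine ofReal_one_sub_le_of_measure_compl_le (by positivity) ?_
  rcases eq_or_ne c 0 with rfl | hc
  · have hzero : ∀ᵐ ω ∂Pr, ∀ i, X i ω = 0 := ae_all_iff.2 fun i ↦ by
      refine ae_of_ae_map (p := (· = 0)) (aemeasurable_of_map_eq_gaussianReal (hX i)) ?_
      rw [hX, gaussianReal_zero_var, ae_dirac_eq]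
      exact Filter.eventually_pure.2 rfl
    refine (ae_iff.1 (hzero.mono fun ω hω ↦ ?_)).trans_le zero_le
    simp [hω]
  have hw1 : 1 ≤ w := (one_le_sqrt.2 (one_le_exp zero_le_one)).trans hw.le
  have hn0 : (Fintype.card ι : ℝ) ≠ 0 := by positivity
  have hsub : {ω | w⁻¹ * √c ≤ √(1 / (Fintype.card ι : ℝ) * ∑ i, X i ω ^ 2)
        ∧ √(1 / (Fintype.card ι : ℝ) * ∑ i, X i ω ^ 2) ≤ w * √c}ᶜ
      ⊆ {ω | ∑ i, X i ω ^ 2 ≤ Fintype.card ι * w⁻¹ ^ 2 * c}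
        ∪ {ω | Fintype.card ι * w ^ 2 * c ≤ ∑ i, X i ω ^ 2} := by
    intro ω hω
    by_contra h
    simp only [Set.mem_union, Set.mem_ofPred_eq, not_or, not_le] at h
    refine hω ⟨?_, ?_⟩
    · rw [mul_sqrt_eq_sqrt_mean hn0 (inv_nonneg.2 hw0.le)]
      gcongr
      exact h.1.le
    · rw [mul_sqrt_eq_sqrt_mean hn0 hw0.le]
      gcongr
      exact h.2.le
  have htail {A : Set Ω} {b : ℝ} (h : Pr.real A ≤ b) : Pr A ≤ ENNReal.ofReal b :=
    ofReal_measureReal (μ := Pr) (s := A) ▸ ENNReal.ofReal_le_ofReal h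
  calc _ ≤ _ := measure_mono hsub
    _ ≤ _ := measure_union_le _ _
    _ ≤ ENNReal.ofReal ((w⁻¹ * exp ((1 - w⁻¹ ^ 2) / 2)) ^ Fintype.card ι)
          + ENNReal.ofReal ((w * exp ((1 - w ^ 2) / 2)) ^ Fintype.card ι) := by
        gcongr
        · exact htail (measureReal_sum_sq_le_le hindep hX hc (inv_pos.2 hw0)
            (inv_le_one_of_one_le₀ hw1))
        · exact htail (measureReal_le_sum_sq_le hindep hX hc hw1)
    _ = _ := (ENNReal.ofReal_add (by positivity) (by positivity)).symm
    _ ≤ _ := ENNReal.ofReal_le_ofReal (chernoff_tails_le hw hn)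

theorem stmt3_general {Ω : Type*} [MeasurableSpace Ω] (Pr : Measure Ω)
    (N K : ℕ) (hK : 3 ≤ K)
    (S : Matrix (Fin N) (Fin N) ℝ)
    (Z : Fin K → Ω → (Fin N → ℝ))
    (hindep : iIndepFun Z Pr)
    (hgauss : ∀ i (a : Fin N → ℝ),
      Measure.map (fun ω => Z i ω ⬝ᵥ a) Pr
        = gaussianReal 0 (Real.toNNReal (a ⬝ᵥ S.mulVec a)))
    (v : Fin N → ℝ) (w : ℝ) (hw : Real.sqrt (Real.exp 1) < w) :
    ENNReal.ofReal (1 - (Real.sqrt (Real.exp 1) / w) ^ K) ≤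
      Pr {ω | w⁻¹ * Real.sqrt (v ⬝ᵥ S.mulVec v)
                ≤ Real.sqrt ((1 / (K : ℝ)) * ∑ i, (Z i ω ⬝ᵥ v) ^ 2)
              ∧ Real.sqrt ((1 / (K : ℝ)) * ∑ i, (Z i ω ⬝ᵥ v) ^ 2)
                ≤ w * Real.sqrt (v ⬝ᵥ S.mulVec v)} := by
  have hdot : Measurable fun x : Fin N → ℝ ↦ x ⬝ᵥ v :=
    (continuous_id.dotProduct continuous_const).measurable
  have h := ofReal_one_sub_le_measure_sqrt_mean_sq_mem (hindep.comp _ fun _ ↦ hdot)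
    (fun i ↦ hgauss i v) (by simpa using hK) hw
  have hsqrt : √((v ⬝ᵥ S *ᵥ v).toNNReal : ℝ) = √(v ⬝ᵥ S *ᵥ v) := by
    rw [Real.sqrt, Real.sqrt, Real.toNNReal_coe]
  rwa [Fintype.card_fin, hsqrt] at h

/-- Let Φ be the random matrix with rows (1/√K)Zᵢᵀ, where Z₁,…,Z_K are iid N(0,Σ),
K ≥ 3.  For any fixed v and w > √e, with probability at least 1 − (√e/w)^K,
w⁻¹‖v‖_Σ ≤ ‖Φv‖₂ ≤ w‖v‖_Σ, where ‖Φv‖₂² = (1/K)∑ᵢ(Zᵢᵀv)². -/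
theorem stmt3 {Ω : Type*} [MeasurableSpace Ω] (Pr : Measure Ω) [IsProbabilityMeasure Pr]
    (N K : ℕ) (hK : 3 ≤ K)
    (S : Matrix (Fin N) (Fin N) ℝ) (hS : S.PosSemidef)
    (Z : Fin K → Ω → (Fin N → ℝ))
    (hmeas : ∀ i, Measurable (Z i))
    (hindep : iIndepFun Z Pr)
    (hgauss : ∀ i (a : Fin N → ℝ),
      Measure.map (fun ω => Z i ω ⬝ᵥ a) Pr
        = gaussianReal 0 (Real.toNNReal (a ⬝ᵥ S.mulVec a)))
    (v : Fin N → ℝ) (w : ℝ) (hw : Real.sqrt (Real.exp 1) < w) :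
    ENNReal.ofReal (1 - (Real.sqrt (Real.exp 1) / w) ^ K) ≤
      Pr {ω | w⁻¹ * Real.sqrt (v ⬝ᵥ S.mulVec v)
                ≤ Real.sqrt ((1 / (K : ℝ)) * ∑ i, (Z i ω ⬝ᵥ v) ^ 2)
              ∧ Real.sqrt ((1 / (K : ℝ)) * ∑ i, (Z i ω ⬝ᵥ v) ^ 2)
                ≤ w * Real.sqrt (v ⬝ᵥ S.mulVec v)} :=
  stmt3_general Pr N K hK S Z hindep hgauss v w hw
end
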